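/- arXiv:1802.07379 — 4 statements merged into one kernel-verified Lean document; each statement's English description precedes it below -/
import Mathlib

section
/- Suppose T ⊆ {1,…,N} has |T| = k and is optimal in the sense that α|λ_j|/(1 − αλ_j) ≥ α|λ_i|/(1 − αλ_i) for every j ∈ T and every i ∉ T. Then for every other subset T' ⊆ {1,…,N} with |T'| = k, both ‖Â_T − A‖₂ ≤ ‖Â_{T'} − A‖₂ and ‖Â_T − A‖_F ≤ ‖Â_{T'} − A‖_F hold; that is, T minimizes the spectral-norm and Frobenius-norm approximation errors of the transformation matrix over all size-k subsets of eigenpairs of S. -/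
/-! In the eigenbasis of `S` both resolvents are diagonal, so `Â_T - A = Q diag(e) Qᵀ` with
`e_i = 0` for `i ∈ T` and `e_i = 1 - (1 - αλ_i)⁻¹ = -αλ_i / (1 - αλ_i)` otherwise. Orthogonal
conjugation preserves both norms, hence `‖Â_T - A‖₂ = max_{i ∉ T} |e_i|` and
`‖Â_T - A‖_F² = ∑_{i ∉ T} e_i²`, and both are smallest when `T` collects `k` largest values of
`|e_i|`: an exchange argument matches `T' \ T` with `T \ T'`. -/

open Matrix

/-- The ℓ2 operator norm (spectral norm) of a real matrix: its operator norm as a linear map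
between Euclidean spaces equipped with the ℓ2 norm. -/
noncomputable def l2OpNorm {N : ℕ} (M : Matrix (Fin N) (Fin N) ℝ) : ℝ :=
  ‖LinearMap.toContinuousLinearMap (Matrix.toEuclideanLin M)‖

/-- The Frobenius norm of a real matrix, `‖M‖_F = sqrt(∑_{a,b} M_{a,b}²)`. -/
noncomputable def frobNorm {N : ℕ} (M : Matrix (Fin N) (Fin N) ℝ) : ℝ :=
  Real.sqrt (∑ a, ∑ b, (M a b) ^ 2)

open Finset

section TopSubset

variable {ι : Type*} [DecidableEq ι] {T T' : Finset ι}

theorem Finset.sum_le_sum_of_card_eq_of_forall_le {g : ι → ℝ} (hcard : #T' = #T)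
    (hg : ∀ j ∈ T, ∀ i ∉ T, g i ≤ g j) : ∑ i ∈ T', g i ≤ ∑ i ∈ T, g i := by
  rw [← sum_inter_add_sum_sdiff T' T, ← sum_inter_add_sum_sdiff T T', inter_comm]
  gcongr _ + ?_
  let e := equivOfCardEq (card_sdiff_comm hcard)
  rw [← sum_coe_sort (T' \ T), ← sum_coe_sort (T \ T'), ← e.sum_comp]
  exact sum_le_sum fun i _ ↦ hg _ (mem_sdiff.mp (e i).2).1 _ (mem_sdiff.mp i.2).2

theorem Finset.sum_compl_le_sum_compl_of_card_eq_of_forall_le [Fintype ι] {g : ι → ℝ}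
    (hcard : #T = #T') (hg : ∀ j ∈ T, ∀ i ∉ T, g i ≤ g j) : ∑ i ∈ Tᶜ, g i ≤ ∑ i ∈ T'ᶜ, g i := by
  have := sum_le_sum_of_card_eq_of_forall_le hcard.symm hg
  linarith [sum_compl_add_sum T g, sum_compl_add_sum T' g]

theorem norm_indicator_compl_le_of_card_eq_of_forall_le [Fintype ι] {E : Type*}
    [SeminormedAddGroup E] {f : ι → E} (hcard : #T = #T') (hf : ∀ j ∈ T, ∀ i ∉ T, ‖f i‖ ≤ ‖f j‖) :
    ‖(↑Tᶜ : Set ι).indicator f‖ ≤ ‖(↑T'ᶜ : Set ι).indicator f‖ := by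
  refine (pi_norm_le_iff_of_nonneg (norm_nonneg _)).mpr fun i ↦ ?_
  have hle : ∀ j ∉ T', ‖f j‖ ≤ ‖(↑T'ᶜ : Set ι).indicator f‖ := fun j hj ↦ by
    have := norm_le_pi_norm ((↑T'ᶜ : Set ι).indicator f) j
    rwa [Set.indicator_of_mem (by simpa using hj)] at this
  by_cases hiT : i ∈ T
  · simp [hiT]
  by_cases hiT' : i ∈ T'
  · obtain ⟨j, hj⟩ : (T \ T').Nonempty := by
      rw [← card_pos, card_sdiff_comm hcard, card_pos]
      exact ⟨i, mem_sdiff.mpr ⟨hiT', hiT⟩⟩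
    simpa [hiT] using (hf j (mem_sdiff.mp hj).1 i hiT).trans (hle j (mem_sdiff.mp hj).2)
  · simpa [hiT] using hle i hiT'

end TopSubset

section Orthogonal

variable {ι : Type*} [Fintype ι] [DecidableEq ι] {Q : Matrix ι ι ℝ}

theorem Matrix.inv_mul_mul_transpose (hQ₁ : Qᵀ * Q = 1) (hQ₂ : Q * Qᵀ = 1) (M : Matrix ι ι ℝ) :
    (Q * M * Qᵀ)⁻¹ = Q * M⁻¹ * Qᵀ := by
  rw [mul_inv_rev, mul_inv_rev, inv_eq_left_inv hQ₂, inv_eq_left_inv hQ₁, Matrix.mul_assoc]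

theorem Matrix.sum_smul_vecMulVec_col_eq_mul_diagonal_mul_transpose (Q : Matrix ι ι ℝ) (c : ι → ℝ)
    (U : Finset ι) :
    ∑ j ∈ U, c j • vecMulVec (fun a => Q a j) (fun a => Q a j)
      = Q * diagonal ((↑U : Set ι).indicator c) * Qᵀ := by
  ext a b
  rw [mul_apply, Matrix.sum_apply]
  simp only [mul_diagonal, transpose_apply, smul_apply, vecMulVec_apply, smul_eq_mul,
    Set.indicator_apply, mem_coe, ite_mul, mul_ite, zero_mul, mul_zero, sum_ite_mem, univ_inter]
  exact sum_congr rfl fun j _ ↦ by ring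

theorem Matrix.one_sub_smul_mul_mul_transpose (hQ₂ : Q * Qᵀ = 1) (a : ℝ) (M : Matrix ι ι ℝ) :
    1 - a • (Q * M * Qᵀ) = Q * (1 - a • M) * Qᵀ := by
  rw [Matrix.mul_sub, Matrix.sub_mul, Matrix.mul_one, hQ₂, Matrix.mul_smul, Matrix.smul_mul]

theorem Matrix.inv_one_sub_smul_diagonal {a : ℝ} {v : ι → ℝ} (hv : ∀ i, 1 - a * v i ≠ 0) :
    (1 - a • diagonal v)⁻¹ = diagonal fun i => (1 - a * v i)⁻¹ := by
  refine inv_eq_left_inv ?_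
  have h : (1 : Matrix ι ι ℝ) - a • diagonal v = diagonal fun i => 1 - a * v i := by
    ext i j
    by_cases hij : i = j <;> simp [hij]
  rw [h, diagonal_mul_diagonal]
  simp [inv_mul_cancel₀ (hv _)]

end Orthogonal

section Norms

variable {N : ℕ} {Q : Matrix (Fin N) (Fin N) ℝ}

open scoped Matrix.Norms.L2Operator

theorem l2OpNorm_eq_norm (M : Matrix (Fin N) (Fin N) ℝ) : l2OpNorm M = ‖M‖ := rfl

theorem l2OpNorm_mul_mul_transpose (hQ₁ : Qᵀ * Q = 1) (hQ₂ : Q * Qᵀ = 1)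
    (M : Matrix (Fin N) (Fin N) ℝ) :
    l2OpNorm (Q * M * Qᵀ) = l2OpNorm M := by
  have hQ : Q ∈ unitary (Matrix (Fin N) (Fin N) ℝ) := by
    rw [Unitary.mem_iff, star_eq_conjTranspose, conjTranspose_eq_transpose_of_trivial]
    exact ⟨hQ₁, hQ₂⟩
  have hQt : Qᵀ ∈ unitary (Matrix (Fin N) (Fin N) ℝ) := by
    rw [← conjTranspose_eq_transpose_of_trivial, ← star_eq_conjTranspose]
    exact Unitary.star_mem hQ
  simp only [l2OpNorm_eq_norm, CStarRing.norm_mul_mem_unitary _ hQt,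
    CStarRing.norm_mem_unitary_mul _ hQ]

theorem l2OpNorm_diagonal (v : Fin N → ℝ) : l2OpNorm (diagonal v) = ‖v‖ :=
  Matrix.l2_opNorm_diagonal v

theorem frobNorm_eq_sqrt_trace (M : Matrix (Fin N) (Fin N) ℝ) :
    frobNorm M = Real.sqrt (trace (Mᵀ * M)) := by
  rw [frobNorm, Finset.sum_comm]
  simp [trace, mul_apply, sq]

theorem frobNorm_mul_mul_transpose (hQ₁ : Qᵀ * Q = 1) (M : Matrix (Fin N) (Fin N) ℝ) :
    frobNorm (Q * M * Qᵀ) = frobNorm M := by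
  have h : (Q * M * Qᵀ)ᵀ * (Q * M * Qᵀ) = Q * (Mᵀ * M) * Qᵀ := by
    simp only [transpose_mul, transpose_transpose, Matrix.mul_assoc]
    rw [← Matrix.mul_assoc Qᵀ Q, hQ₁, Matrix.one_mul]
  rw [frobNorm_eq_sqrt_trace, frobNorm_eq_sqrt_trace, h, trace_mul_comm, ← Matrix.mul_assoc, hQ₁,
    Matrix.one_mul]

theorem frobNorm_diagonal (v : Fin N → ℝ) :
    frobNorm (diagonal v) = Real.sqrt (∑ i, v i ^ 2) := by
  simp [frobNorm_eq_sqrt_trace, trace, sq]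

end Norms

section Resolvent

variable {ι : Type*} [Fintype ι] [DecidableEq ι] {Q : Matrix ι ι ℝ}

theorem inv_one_sub_truncation_sub_inv_one_sub (hQ₁ : Qᵀ * Q = 1) (hQ₂ : Q * Qᵀ = 1) {α : ℝ}
    {lam : ι → ℝ} (hlam : ∀ i, 1 - α * lam i ≠ 0) (U : Finset ι) :
    (1 - α • ∑ j ∈ U, lam j • vecMulVec (fun a => Q a j) (fun a => Q a j))⁻¹
        - (1 - α • (Q * diagonal lam * Qᵀ))⁻¹
      = Q * diagonal ((↑Uᶜ : Set ι).indicator fun i => 1 - (1 - α * lam i)⁻¹) * Qᵀ := by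
  have hlamU : ∀ i, 1 - α * (↑U : Set ι).indicator lam i ≠ 0 := fun i ↦ by
    by_cases hi : i ∈ U <;> simp [hi, hlam i]
  rw [sum_smul_vecMulVec_col_eq_mul_diagonal_mul_transpose, one_sub_smul_mul_mul_transpose hQ₂,
    one_sub_smul_mul_mul_transpose hQ₂, inv_mul_mul_transpose hQ₁ hQ₂,
    inv_mul_mul_transpose hQ₁ hQ₂, inv_one_sub_smul_diagonal hlamU,
    inv_one_sub_smul_diagonal hlam, ← Matrix.sub_mul, ← Matrix.mul_sub, diagonal_sub]
  congr 3 with i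
  by_cases hi : i ∈ U <;> simp [hi]

theorem abs_one_sub_inv_one_sub_mul {α x : ℝ} (hα : 0 < α) (hx : 0 < 1 - α * x) :
    |1 - (1 - α * x)⁻¹| = α * |x| / (1 - α * x) := by
  rw [show 1 - (1 - α * x)⁻¹ = -(α * x) / (1 - α * x) by field_simp; ring, abs_div, abs_neg,
    abs_mul, abs_of_pos hα, abs_of_pos hx]

end Resolvent

/-- **Optimality of the eigenvalue selection.** With `S = Q Λ Qᵀ` a spectral decomposition of
the real symmetric matrix `S` (eigenvalues in `[-1,1]`), `α ∈ (0,1)`,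
`S_T = ∑_{j ∈ T} λ_j q_j q_jᵀ`, `A = (I - αS)⁻¹` and `Â_T = (I - αS_T)⁻¹`: if `|T| = k` and
`α|λ_j|/(1-αλ_j) ≥ α|λ_i|/(1-αλ_i)` for all `j ∈ T`, `i ∉ T`, then for every other subset
`T'` of size `k` we have `‖Â_T - A‖₂ ≤ ‖Â_{T'} - A‖₂` and `‖Â_T - A‖_F ≤ ‖Â_{T'} - A‖_F`. -/
theorem stmt5 (N k : ℕ) (α : ℝ) (hα : α ∈ Set.Ioo (0 : ℝ) 1)
    (Q : Matrix (Fin N) (Fin N) ℝ) (hQ₁ : Qᵀ * Q = 1) (hQ₂ : Q * Qᵀ = 1)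
    (lam : Fin N → ℝ) (hlam : ∀ i, lam i ∈ Set.Icc (-1 : ℝ) 1)
    (S : Matrix (Fin N) (Fin N) ℝ) (hS : S = Q * Matrix.diagonal lam * Qᵀ)
    (T T' : Finset (Fin N)) (hT : T.card = k) (hT' : T'.card = k)
    (hopt : ∀ j ∈ T, ∀ i ∉ T,
      α * |lam i| / (1 - α * lam i) ≤ α * |lam j| / (1 - α * lam j))
    (ST ST' : Matrix (Fin N) (Fin N) ℝ)
    (hST : ST = ∑ j ∈ T, lam j • Matrix.vecMulVec (fun a => Q a j) (fun a => Q a j))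
    (hST' : ST' = ∑ j ∈ T', lam j • Matrix.vecMulVec (fun a => Q a j) (fun a => Q a j))
    (A Ahat Ahat' : Matrix (Fin N) (Fin N) ℝ)
    (hA : A = (1 - α • S)⁻¹)
    (hAhat : Ahat = (1 - α • ST)⁻¹) (hAhat' : Ahat' = (1 - α • ST')⁻¹) :
    l2OpNorm (Ahat - A) ≤ l2OpNorm (Ahat' - A) ∧
      frobNorm (Ahat - A) ≤ frobNorm (Ahat' - A) := by
  obtain ⟨hα₀, hα₁⟩ := hα
  subst hS hST hST' hA hAhat hAhat'
  have hpos : ∀ i, 0 < 1 - α * lam i := fun i ↦ by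
    nlinarith [(hlam i).1, (hlam i).2]
  set f : Fin N → ℝ := fun i => 1 - (1 - α * lam i)⁻¹
  have hf : ∀ j ∈ T, ∀ i ∉ T, ‖f i‖ ≤ ‖f j‖ := by
    simpa only [f, Real.norm_eq_abs, abs_one_sub_inv_one_sub_mul hα₀ (hpos _)] using hopt
  have hcard : #T = #T' := hT.trans hT'.symm
  have hsq (U : Finset (Fin N)) :
      ∑ i, ((↑Uᶜ : Set (Fin N)).indicator f i) ^ 2 = ∑ i ∈ Uᶜ, f i ^ 2 := by
    rw [← sum_indicator_subset _ (subset_univ Uᶜ)]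
    congr with i
    by_cases hi : i ∈ U <;> simp [hi]
  have hres := inv_one_sub_truncation_sub_inv_one_sub hQ₁ hQ₂ (fun i ↦ (hpos i).ne')
  rw [hres, hres, l2OpNorm_mul_mul_transpose hQ₁ hQ₂, l2OpNorm_mul_mul_transpose hQ₁ hQ₂,
    l2OpNorm_diagonal, l2OpNorm_diagonal, frobNorm_mul_mul_transpose hQ₁,
    frobNorm_mul_mul_transpose hQ₁, frobNorm_diagonal, frobNorm_diagonal, hsq, hsq]
  refine ⟨norm_indicator_compl_le_of_card_eq_of_forall_le hcard hf, Real.sqrt_le_sqrt ?_⟩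
  exact sum_compl_le_sum_compl_of_card_eq_of_forall_le hcard fun j hj i hi ↦
    sq_le_sq.mpr (hf j hj i hi)
end

section
/- Let λ_1,…,λ_N ∈ [-1,1], α ∈ (0,1), and k ≥ 1. Suppose T ⊆ {1,…,N} has |T| = k and satisfies α|λ_j|/(1 − αλ_j) ≥ α|λ_i|/(1 − αλ_i) for every j ∈ T and every i ∉ T. Then every j ∈ T is among the k algebraically largest or the k algebraically smallest of the values λ_1,…,λ_N; precisely, for every j ∈ T, either #{i ∈ {1,…,N} : λ_i > λ_j} < k or #{i ∈ {1,…,N} : λ_i < λ_j} < k. -/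
/-- **Optimal eigenvalues are among the `k` largest or `k` smallest.** Let
`λ_1, …, λ_N ∈ [-1,1]`, `α ∈ (0,1)`, `k ≥ 1`. If `T` has cardinality `k` and
`α|λ_j|/(1-αλ_j) ≥ α|λ_i|/(1-αλ_i)` for every `j ∈ T` and `i ∉ T`, then every `j ∈ T` is among
the `k` algebraically largest or `k` algebraically smallest of the `λ_i`: either fewer than `k`
indices satisfy `λ_i > λ_j`, or fewer than `k` indices satisfy `λ_i < λ_j`. -/
theorem stmt6 (N k : ℕ) (hk : 1 ≤ k) (α : ℝ) (hα : α ∈ Set.Ioo (0 : ℝ) 1)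
    (lam : Fin N → ℝ) (hlam : ∀ i, lam i ∈ Set.Icc (-1 : ℝ) 1)
    (T : Finset (Fin N)) (hT : T.card = k)
    (hopt : ∀ j ∈ T, ∀ i ∉ T,
      α * |lam i| / (1 - α * lam i) ≤ α * |lam j| / (1 - α * lam j)) :
    ∀ j ∈ T, {i : Fin N | lam j < lam i}.ncard < k ∨
      {i : Fin N | lam i < lam j}.ncard < k := by
  intro j hj
  by_contra hcon
  push_neg at hcon
  obtain ⟨hA, hB⟩ := hcon
  have hden : ∀ i, 0 < 1 - α * lam i := by
    intro i
    have h1 := (hlam i).2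
    have h2 := (hlam i).1
    nlinarith [hα.1, hα.2]
  have key : ∀ (S : Set (Fin N)), j ∉ S → k ≤ S.ncard → ∃ i ∈ S, i ∉ T := by
    intro S hjS hS
    by_contra h
    push_neg at h
    have hsub : S ⊆ ↑(T.erase j) := by
      intro i hi
      simp only [Finset.coe_erase, Set.mem_diff, Set.mem_singleton_iff]
      refine ⟨h i hi, ?_⟩
      rintro rfl
      exact hjS hi
    have hle := Set.ncard_le_ncard hsub (T.erase j).finite_toSet
    rw [Set.ncard_coe_finset, Finset.card_erase_of_mem hj, hT] at hle
    omega
  obtain ⟨a, ha, haT⟩ := key _ (by simp) hA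
  obtain ⟨b, hb, hbT⟩ := key _ (by simp) hB
  simp only [Set.mem_setOf_eq] at ha hb
  have h1 := hopt j hj a haT
  have h2 := hopt j hj b hbT
  rcases le_or_gt 0 (lam j) with hjpos | hjneg
  · have haj : (0:ℝ) ≤ lam a := le_of_lt (lt_of_le_of_lt hjpos ha)
    rw [abs_of_nonneg haj, abs_of_nonneg hjpos, div_le_div_iff₀ (hden a) (hden j)] at h1
    nlinarith [hα.1, ha]
  · have hbj : lam b < 0 := lt_trans hb hjneg
    rw [abs_of_neg hbj, abs_of_neg hjneg, div_le_div_iff₀ (hden b) (hden j)] at h2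
    nlinarith [hα.1, hb]
end

section
/- Let x : {1,…,m} → ℝ and y : {1,…,n} → ℝ, let k ≥ 1, and let (a,b) be a pair of indices such that x_a·y_b ≠ 0 and x_a·y_b is among the k largest entries of the outer product, i.e. #{(i,j) : x_i·y_j > x_a·y_b} < k. Then x_a is among the k largest or the k smallest entries of x (that is, #{i : x_i > x_a} < k or #{i : x_i < x_a} < k), and likewise y_b is among the k largest or the k smallest entries of y (that is, #{j : y_j > y_b} < k or #{j : y_j < y_b} < k). -/
/-!
If `y b > 0`, every `i` with `x a < x i` gives the larger product `x i * y b`; if `y b < 0`,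
every `i` with `x i < x a` does. Either way `i ↦ (i, b)` embeds one of the two sets into the
set of entries of the outer product above `x a * y b`, which has fewer than `k` elements.
The same argument with the roles of `x` and `y` exchanged handles `y b`, using `x a ≠ 0`.
-/

section Slices

variable {α β : Type*}

theorem ncard_le_ncard_of_mk_right_mem {s : Set α} {t : Set (α × β)} (b : β) (ht : t.Finite)
    (h : ∀ a ∈ s, (a, b) ∈ t) : s.ncard ≤ t.ncard :=
  Set.ncard_le_ncard_of_injOn (·, b) h (fun _ _ _ _ hab => congrArg Prod.fst hab) ht

theorem ncard_le_ncard_of_mk_left_mem {s : Set β} {t : Set (α × β)} (a : α) (ht : t.Finite)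
    (h : ∀ b ∈ s, (a, b) ∈ t) : s.ncard ≤ t.ncard :=
  Set.ncard_le_ncard_of_injOn (a, ·) h (fun _ _ _ _ hab => congrArg Prod.snd hab) ht

end Slices

section Scaling

variable {R ι : Type*} [Ring R] [LinearOrder R] [IsStrictOrderedRing R]

theorem setOf_mul_right_lt_eq_or (x : ι → R) (a : ι) {c : R} (hc : c ≠ 0) :
    {i | x a * c < x i * c} = {i | x a < x i} ∨ {i | x a * c < x i * c} = {i | x i < x a} := by
  rcases hc.lt_or_gt with hc | hc
  · exact .inr (Set.ext fun _ => mul_lt_mul_right_of_neg hc)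
  · exact .inl (Set.ext fun _ => mul_lt_mul_iff_of_pos_right hc)

theorem setOf_mul_left_lt_eq_or (y : ι → R) (b : ι) {c : R} (hc : c ≠ 0) :
    {j | c * y b < c * y j} = {j | y b < y j} ∨ {j | c * y b < c * y j} = {j | y j < y b} := by
  rcases hc.lt_or_gt with hc | hc
  · exact .inr (Set.ext fun _ => mul_lt_mul_left_of_neg hc)
  · exact .inl (Set.ext fun _ => mul_lt_mul_iff_of_pos_left hc)

end Scaling

theorem stmt8_general (m n k : ℕ) (x : Fin m → ℝ) (y : Fin n → ℝ)
    (a : Fin m) (b : Fin n) (hne : x a * y b ≠ 0)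
    (htop : {p : Fin m × Fin n | x a * y b < x p.1 * y p.2}.ncard < k) :
    ({i : Fin m | x a < x i}.ncard < k ∨ {i : Fin m | x i < x a}.ncard < k) ∧
      ({j : Fin n | y b < y j}.ncard < k ∨ {j : Fin n | y j < y b}.ncard < k) := by
  have hT := Set.toFinite {p : Fin m × Fin n | x a * y b < x p.1 * y p.2}
  have hrow : {i | x a * y b < x i * y b}.ncard < k :=
    (ncard_le_ncard_of_mk_right_mem b hT fun _ hi => hi).trans_lt htop
  have hcol : {j | x a * y b < x a * y j}.ncard < k :=
    (ncard_le_ncard_of_mk_left_mem a hT fun _ hj => hj).trans_lt htop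
  constructor
  · rcases setOf_mul_right_lt_eq_or x a (right_ne_zero_of_mul hne) with h | h <;> rw [h] at hrow
    exacts [.inl hrow, .inr hrow]
  · rcases setOf_mul_left_lt_eq_or y b (left_ne_zero_of_mul hne) with h | h <;> rw [h] at hcol
    exacts [.inl hcol, .inr hcol]

/-- **Top-k entries of an outer product come from top/bottom-k entries of the factors.**
Let `x : {1,…,m} → ℝ`, `y : {1,…,n} → ℝ`, `k ≥ 1`, and let `(a,b)` be such that
`x_a·y_b ≠ 0` and `x_a·y_b` is among the `k` largest entries of the outer product
(fewer than `k` pairs `(i,j)` satisfy `x_i·y_j > x_a·y_b`). Then `x_a` is among the `k`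
largest or the `k` smallest entries of `x`, and `y_b` is among the `k` largest or the `k`
smallest entries of `y`. -/
theorem stmt8 (m n k : ℕ) (hk : 1 ≤ k) (x : Fin m → ℝ) (y : Fin n → ℝ)
    (a : Fin m) (b : Fin n) (hne : x a * y b ≠ 0)
    (htop : {p : Fin m × Fin n | x a * y b < x p.1 * y p.2}.ncard < k) :
    ({i : Fin m | x a < x i}.ncard < k ∨ {i : Fin m | x i < x a}.ncard < k) ∧
      ({j : Fin n | y b < y j}.ncard < k ∨ {j : Fin n | y j < y b}.ncard < k) :=
  stmt8_general m n k x y a b hne htop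
end

section
/- Assume additionally that the eigenvalues are sorted, λ_1 ≥ λ_2 ≥ … ≥ λ_N, and that 1 ≤ k < N. Let T* ⊆ {1,…,N} with |T*| = k satisfy α|λ_j|/(1 − αλ_j) ≥ α|λ_i|/(1 − αλ_i) for every j ∈ T* and every i ∉ T*, and let A_k = Σ_{i=1}^{k} (1/(1 − αλ_i)) q_i q_iᵀ be the truncation of A that keeps its k largest eigenvalues (the best rank-k approximation of A). Then ‖Â_{T*} − A‖₂ < ‖A_k − A‖₂ and ‖Â_{T*} − A‖_F < ‖A_k − A‖_F. -/
/-!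
Every matrix involved is diagonal in the orthonormal basis of columns of `Q`, and both norms are
orthogonally invariant, so they reduce to the sup norm and the ℓ² norm of eigenvalue vectors.
Writing `x_i = αλ_i`, the error `Â_{T*} - A` has eigenvalue `0` on `T*` and `1 - 1/(1 - x_i)`, of
modulus `α|λ_i|/(1 - αλ_i)`, off it, while `A_k - A` has eigenvalue `0` on the first `k` indices
and `-1/(1 - x_i)` off them; as `|x_i| < 1`, the first modulus is strictly below the second at
every index. Maximality of `T*` does the rest: every index outside `T*` is dominated by one outside
the first `k` (pigeonhole), and the sum over the complement of `T*` is at most the sum over the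
complement of any other `k`-set (exchange argument).
-/

open Matrix

namespace Finset

variable {ι M : Type*}

lemma sum_le_sum_of_card_eq_of_forall_le_s9 [AddCommMonoid M] [LinearOrder M]
    [IsOrderedAddMonoid M] {s t : Finset ι} (hcard : s.card = t.card) {f : ι → M}
    (hle : ∀ i ∈ s, ∀ j ∈ t, f i ≤ f j) :
    ∑ i ∈ s, f i ≤ ∑ j ∈ t, f j := by
  rcases s.eq_empty_or_nonempty with rfl | hs
  · rw [card_empty, eq_comm, card_eq_zero] at hcard
    simp [hcard]
  calc ∑ i ∈ s, f i ≤ s.card • s.sup' hs f :=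
        sum_le_card_nsmul _ _ _ fun i hi => le_sup' f hi
    _ ≤ ∑ j ∈ t, f j := by
      rw [hcard]
      exact card_nsmul_le_sum _ _ _ fun j hj => (sup'_le_iff hs f).2 fun i hi => hle i hi j hj

lemma sum_compl_le_sum_compl_of_forall_le [Fintype ι] [DecidableEq ι] [AddCommMonoid M]
    [LinearOrder M] [IsOrderedCancelAddMonoid M] {s t : Finset ι} (hcard : s.card = t.card)
    {f : ι → M} (hmax : ∀ j ∈ t, ∀ i ∉ t, f i ≤ f j) :
    ∑ i ∈ tᶜ, f i ≤ ∑ i ∈ sᶜ, f i := by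
  have hst : ∑ i ∈ s, f i ≤ ∑ i ∈ t, f i := by
    rw [← sum_inter_add_sum_sdiff s t, ← sum_inter_add_sum_sdiff t s, inter_comm]
    refine add_le_add_right (sum_le_sum_of_card_eq_of_forall_le_s9 (card_sdiff_comm hcard) ?_) _
    intro i hi j hj
    exact hmax j (mem_sdiff.1 hj).1 i (mem_sdiff.1 hi).2
  refine le_of_add_le_add_left (a := ∑ i ∈ t, f i) ?_
  rw [sum_add_sum_compl, ← sum_add_sum_compl s]
  exact add_le_add_left hst _

lemma exists_notMem_le_of_forall_le [Preorder M] {s t : Finset ι} (hcard : s.card = t.card)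
    {f : ι → M} (hmax : ∀ j ∈ t, ∀ i ∉ t, f i ≤ f j) {i : ι} (hi : i ∉ t) :
    ∃ j ∉ s, f i ≤ f j := by
  by_cases his : i ∈ s
  · have hts : ¬ t ⊆ s := fun hts => hi (eq_of_subset_of_card_le hts hcard.le ▸ his)
    obtain ⟨j, hjt, hjs⟩ := not_subset.1 hts
    exact ⟨j, hjs, hmax j hjt i hi⟩
  · exact ⟨i, his, le_rfl⟩

end Finset

section PiecewiseZero

variable {ι : Type*} [Fintype ι] [DecidableEq ι] {s t : Finset ι} {u v : ι → ℝ}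

lemma sum_sq_compl_piecewise_zero (t : Finset ι) (u : ι → ℝ) :
    ∑ i, tᶜ.piecewise u 0 i ^ 2 = ∑ i ∈ tᶜ, u i ^ 2 := by
  rw [← Finset.sum_compl_add_sum t, add_eq_left.2 (Finset.sum_eq_zero fun i hi => by simp [hi])]
  exact Finset.sum_congr rfl fun i hi => by rw [Finset.piecewise_eq_of_mem _ _ _ hi]

lemma abs_le_norm_piecewise_zero {i : ι} (hi : i ∈ s) : |v i| ≤ ‖s.piecewise v 0‖ := by
  simpa [Finset.piecewise_eq_of_mem _ _ _ hi] using norm_le_pi_norm (s.piecewise v 0) i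

lemma norm_compl_piecewise_zero_lt (hcard : s.card = t.card) (hs : sᶜ.Nonempty)
    (huv : ∀ i, |u i| < |v i|) (hmax : ∀ j ∈ t, ∀ i ∉ t, |u i| ≤ |u j|) :
    ‖tᶜ.piecewise u 0‖ < ‖sᶜ.piecewise v 0‖ := by
  obtain ⟨j₀, hj₀⟩ := hs
  have hpos : 0 < ‖sᶜ.piecewise v 0‖ :=
    ((abs_nonneg _).trans_lt (huv j₀)).trans_le (abs_le_norm_piecewise_zero hj₀)
  refine (pi_norm_lt_iff hpos).2 fun i => ?_
  by_cases hi : i ∈ t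
  · simpa [hi] using hpos
  obtain ⟨j, hj, hij⟩ := Finset.exists_notMem_le_of_forall_le hcard hmax hi
  rw [Finset.piecewise_eq_of_mem _ _ _ (Finset.mem_compl.2 hi), Real.norm_eq_abs]
  exact hij.trans_lt ((huv j).trans_le (abs_le_norm_piecewise_zero (Finset.mem_compl.2 hj)))

lemma sum_sq_compl_piecewise_zero_lt (hcard : s.card = t.card) (hs : sᶜ.Nonempty)
    (huv : ∀ i, |u i| < |v i|) (hmax : ∀ j ∈ t, ∀ i ∉ t, |u i| ≤ |u j|) :
    ∑ i, tᶜ.piecewise u 0 i ^ 2 < ∑ i, sᶜ.piecewise v 0 i ^ 2 := by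
  rw [sum_sq_compl_piecewise_zero, sum_sq_compl_piecewise_zero]
  calc ∑ i ∈ tᶜ, u i ^ 2 ≤ ∑ i ∈ sᶜ, u i ^ 2 :=
        Finset.sum_compl_le_sum_compl_of_forall_le hcard fun j hj i hi =>
          sq_le_sq.2 (hmax j hj i hi)
    _ < ∑ i ∈ sᶜ, v i ^ 2 := Finset.sum_lt_sum_of_nonempty hs fun i _ => sq_lt_sq.2 (huv i)

end PiecewiseZero

section OrthogonalConjugation

variable {n : Type*} [Fintype n] [DecidableEq n]

lemma sum_smul_vecMulVec_col_eq (Q : Matrix n n ℝ) (t : Finset n) (c : n → ℝ) :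
    ∑ j ∈ t, c j • vecMulVec (fun a => Q a j) (fun a => Q a j)
      = Q * diagonal (t.piecewise c 0) * Qᵀ := by
  ext a b
  rw [mul_apply, Matrix.sum_apply]
  simp only [mul_diagonal, transpose_apply, Finset.piecewise, Matrix.smul_apply, vecMulVec_apply,
    smul_eq_mul, mul_ite, ite_mul, mul_zero, zero_mul, Pi.zero_apply, Finset.sum_ite_mem,
    Finset.univ_inter]
  exact Finset.sum_congr rfl fun j _ => by ring

lemma conj_diagonal_sub (Q : Matrix n n ℝ) (d e : n → ℝ) :
    Q * diagonal d * Qᵀ - Q * diagonal e * Qᵀ = Q * diagonal (d - e) * Qᵀ := by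
  rw [← Matrix.sub_mul, ← Matrix.mul_sub, diagonal_sub]
  rfl

lemma conj_diagonal_one {Q : Matrix n n ℝ} (hQ : Qᵀ * Q = 1) : Q * diagonal 1 * Qᵀ = 1 := by
  rw [diagonal_one', Matrix.mul_one, mul_eq_one_comm.mp hQ]

lemma conj_diagonal_mul {Q : Matrix n n ℝ} (hQ : Qᵀ * Q = 1) (d e : n → ℝ) :
    Q * diagonal d * Qᵀ * (Q * diagonal e * Qᵀ) = Q * diagonal (d * e) * Qᵀ := by
  calc Q * diagonal d * Qᵀ * (Q * diagonal e * Qᵀ)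
      = Q * diagonal d * (Qᵀ * Q) * diagonal e * Qᵀ := by simp only [Matrix.mul_assoc]
    _ = Q * diagonal (d * e) * Qᵀ := by
      rw [hQ, Matrix.mul_one, Matrix.mul_assoc Q, diagonal_mul_diagonal]
      rfl

lemma inv_one_sub_smul_conj_diagonal {Q : Matrix n n ℝ} (hQ : Qᵀ * Q = 1) (c : ℝ)
    {d : n → ℝ} (hd : ∀ i, c * d i ≠ 1) :
    (1 - c • (Q * diagonal d * Qᵀ))⁻¹ = Q * diagonal (1 - c • d)⁻¹ * Qᵀ := by
  have hconj : 1 - c • (Q * diagonal d * Qᵀ) = Q * diagonal (1 - c • d) * Qᵀ := by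
    rw [← conj_diagonal_sub, conj_diagonal_one hQ, diagonal_smul, Matrix.mul_smul,
      Matrix.smul_mul]
  have hinv : (1 - c • d)⁻¹ * (1 - c • d) = 1 :=
    funext fun i => inv_mul_cancel₀ (sub_ne_zero.2 (hd i).symm)
  rw [hconj]
  exact inv_eq_left_inv (by rw [conj_diagonal_mul hQ, hinv, conj_diagonal_one hQ])

lemma inv_one_sub_smul_truncation_sub {Q : Matrix n n ℝ} (hQ : Qᵀ * Q = 1) (c : ℝ)
    {d : n → ℝ} (hd : ∀ i, c * d i ≠ 1) (t : Finset n) :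
    (1 - c • ∑ j ∈ t, d j • vecMulVec (fun a => Q a j) (fun a => Q a j))⁻¹
        - (1 - c • (Q * diagonal d * Qᵀ))⁻¹
      = Q * diagonal (tᶜ.piecewise (1 - (1 - c • d)⁻¹) 0) * Qᵀ := by
  have hdt : ∀ i, c * t.piecewise d 0 i ≠ 1 := fun i => by
    by_cases hi : i ∈ t <;> simp [hi, hd i]
  rw [sum_smul_vecMulVec_col_eq, inv_one_sub_smul_conj_diagonal hQ c hdt,
    inv_one_sub_smul_conj_diagonal hQ c hd, conj_diagonal_sub]
  congr 3
  ext i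
  by_cases hi : i ∈ t <;> simp [hi]

lemma sum_smul_vecMulVec_col_sub_conj (Q : Matrix n n ℝ) (t : Finset n) (e : n → ℝ) :
    ∑ j ∈ t, e j • vecMulVec (fun a => Q a j) (fun a => Q a j) - Q * diagonal e * Qᵀ
      = Q * diagonal (tᶜ.piecewise (-e) 0) * Qᵀ := by
  rw [sum_smul_vecMulVec_col_eq, conj_diagonal_sub]
  congr 3
  ext i
  by_cases hi : i ∈ t <;> simp [hi]

end OrthogonalConjugation

open scoped Matrix.Norms.L2Operator in
lemma l2OpNorm_conj_diagonal {N : ℕ} {Q : Matrix (Fin N) (Fin N) ℝ} (hQ : Qᵀ * Q = 1)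
    (d : Fin N → ℝ) : l2OpNorm (Q * diagonal d * Qᵀ) = ‖d‖ := by
  have hU : Q ∈ unitary (Matrix (Fin N) (Fin N) ℝ) := by
    rw [← Matrix.unitaryGroup, mem_unitaryGroup_iff', star_eq_conjTranspose,
      conjTranspose_eq_transpose_of_trivial]
    exact hQ
  have hUt : Qᵀ ∈ unitary (Matrix (Fin N) (Fin N) ℝ) := by
    simpa [star_eq_conjTranspose] using Unitary.star_mem hU
  change ‖Q * diagonal d * Qᵀ‖ = ‖d‖
  rw [CStarRing.norm_mul_mem_unitary _ hUt, CStarRing.norm_mem_unitary_mul _ hU,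
    l2_opNorm_diagonal]

lemma sum_sq_entries_eq_trace {n : Type*} [Fintype n] (M : Matrix n n ℝ) :
    ∑ a, ∑ b, M a b ^ 2 = (Mᵀ * M).trace := by
  simp only [trace, diag, mul_apply, transpose_apply, sq]
  exact Finset.sum_comm

lemma frobNorm_conj_diagonal {N : ℕ} {Q : Matrix (Fin N) (Fin N) ℝ} (hQ : Qᵀ * Q = 1)
    (d : Fin N → ℝ) : frobNorm (Q * diagonal d * Qᵀ) = √(∑ i, d i ^ 2) := by
  have hsymm : (Q * diagonal d * Qᵀ)ᵀ = Q * diagonal d * Qᵀ := by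
    rw [transpose_mul, transpose_mul, transpose_transpose, diagonal_transpose, Matrix.mul_assoc]
  rw [frobNorm, sum_sq_entries_eq_trace, hsymm, conj_diagonal_mul hQ, trace_mul_cycle, hQ,
    Matrix.one_mul, trace_diagonal]
  simp only [Pi.mul_apply, sq]

lemma abs_one_sub_inv_one_sub {x : ℝ} (hx : x < 1) : |1 - (1 - x)⁻¹| = |x| / (1 - x) := by
  have hpos : 0 < 1 - x := sub_pos.2 hx
  rw [show 1 - (1 - x)⁻¹ = -x / (1 - x) by field_simp; ring, abs_div, abs_neg, abs_of_pos hpos]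

lemma abs_one_sub_inv_one_sub_lt {x : ℝ} (hx : |x| < 1) :
    |1 - (1 - x)⁻¹| < |(1 - x)⁻¹| := by
  have hlt : x < 1 := (le_abs_self x).trans_lt hx
  have hpos : 0 < 1 - x := sub_pos.2 hlt
  rw [abs_one_sub_inv_one_sub hlt, abs_inv, abs_of_pos hpos, ← one_div]
  exact div_lt_div_of_pos_right hx hpos

theorem stmt9_general (N k : ℕ) (hkN : k < N) (α : ℝ) (hα : α ∈ Set.Ioo (0 : ℝ) 1)
    (Q : Matrix (Fin N) (Fin N) ℝ) (hQ₁ : Qᵀ * Q = 1)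
    (lam : Fin N → ℝ) (hlam : ∀ i, lam i ∈ Set.Icc (-1 : ℝ) 1)
    (S : Matrix (Fin N) (Fin N) ℝ) (hS : S = Q * Matrix.diagonal lam * Qᵀ)
    (Tstar : Finset (Fin N)) (hTcard : Tstar.card = k)
    (hopt : ∀ j ∈ Tstar, ∀ i ∉ Tstar,
      α * |lam i| / (1 - α * lam i) ≤ α * |lam j| / (1 - α * lam j))
    (ST : Matrix (Fin N) (Fin N) ℝ)
    (hST : ST = ∑ j ∈ Tstar, lam j • Matrix.vecMulVec (fun a => Q a j) (fun a => Q a j))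
    (A Ahat Ak : Matrix (Fin N) (Fin N) ℝ)
    (hA : A = (1 - α • S)⁻¹) (hAhat : Ahat = (1 - α • ST)⁻¹)
    (hAk : Ak = ∑ i ∈ Finset.univ.filter (fun i : Fin N => (i : ℕ) < k),
      (1 / (1 - α * lam i)) • Matrix.vecMulVec (fun a => Q a i) (fun a => Q a i)) :
    l2OpNorm (Ahat - A) < l2OpNorm (Ak - A) ∧
      frobNorm (Ahat - A) < frobNorm (Ak - A) := by
  obtain ⟨hα0, hα1⟩ := hα
  have hsmall : ∀ i, |α * lam i| < 1 := fun i => by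
    rw [abs_mul, abs_of_pos hα0]
    exact (mul_le_of_le_one_right hα0.le (abs_le.2 (hlam i))).trans_lt hα1
  have hlt : ∀ i, α * lam i < 1 := fun i => (le_abs_self _).trans_lt (hsmall i)
  set g : Fin N → ℝ := (1 - α • lam)⁻¹
  have hg : ∀ i, g i = (1 - α * lam i)⁻¹ := fun i => rfl
  have habs : ∀ i, |(1 - g) i| = α * |lam i| / (1 - α * lam i) := fun i => by
    rw [Pi.sub_apply, Pi.one_apply, hg, abs_one_sub_inv_one_sub (hlt i), abs_mul, abs_of_pos hα0]
  have hmax : ∀ j ∈ Tstar, ∀ i ∉ Tstar, |(1 - g) i| ≤ |(1 - g) j| := fun j hj i hi =>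
    (habs i).trans_le ((hopt j hj i hi).trans_eq (habs j).symm)
  have huv : ∀ i, |(1 - g) i| < |(-g) i| := fun i => by
    rw [Pi.sub_apply, Pi.one_apply, Pi.neg_apply, abs_neg, hg]
    exact abs_one_sub_inv_one_sub_lt (hsmall i)
  set U : Finset (Fin N) := Finset.univ.filter (fun i : Fin N => (i : ℕ) < k)
  have hcard : U.card = Tstar.card := by
    rw [hTcard, Fin.card_filter_val_lt, min_eq_right hkN.le]
  have hU : Uᶜ.Nonempty := ⟨⟨k, hkN⟩, by simp [U]⟩
  have hAk' : Ak = ∑ i ∈ U, g i • vecMulVec (fun a => Q a i) (fun a => Q a i) := by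
    simp only [hAk, hg, one_div]
  have hne : ∀ i, α * lam i ≠ 1 := fun i => (hlt i).ne
  rw [hAhat, hST, hA, hS, inv_one_sub_smul_truncation_sub hQ₁ α hne,
    inv_one_sub_smul_conj_diagonal hQ₁ α hne, hAk', sum_smul_vecMulVec_col_sub_conj,
    l2OpNorm_conj_diagonal hQ₁, l2OpNorm_conj_diagonal hQ₁,
    frobNorm_conj_diagonal hQ₁, frobNorm_conj_diagonal hQ₁]
  exact ⟨norm_compl_piecewise_zero_lt hcard hU huv hmax,
    Real.sqrt_lt_sqrt (by positivity) (sum_sq_compl_piecewise_zero_lt hcard hU huv hmax)⟩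

/-- **The selected low-rank transformation beats the best rank-`k` approximation of `A`.**
With `S = Q Λ Qᵀ` a spectral decomposition of the real symmetric matrix `S` (eigenvalues in
`[-1,1]` and sorted decreasingly), `α ∈ (0,1)`, `1 ≤ k < N`, let `T*` of size `k` satisfy
`α|λ_j|/(1-αλ_j) ≥ α|λ_i|/(1-αλ_i)` for all `j ∈ T*`, `i ∉ T*`, and let
`A_k = ∑_{i=1}^{k} (1/(1-αλ_i)) q_i q_iᵀ` be the truncation of `A = (I - αS)⁻¹` keeping its
`k` largest eigenvalues. Then `‖Â_{T*} - A‖₂ < ‖A_k - A‖₂` and `‖Â_{T*} - A‖_F < ‖A_k - A‖_F`,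
where `Â_{T*} = (I - αS_{T*})⁻¹` and `S_{T*} = ∑_{j ∈ T*} λ_j q_j q_jᵀ`. -/
theorem stmt9 (N k : ℕ) (hk₁ : 1 ≤ k) (hkN : k < N) (α : ℝ) (hα : α ∈ Set.Ioo (0 : ℝ) 1)
    (Q : Matrix (Fin N) (Fin N) ℝ) (hQ₁ : Qᵀ * Q = 1) (hQ₂ : Q * Qᵀ = 1)
    (lam : Fin N → ℝ) (hlam : ∀ i, lam i ∈ Set.Icc (-1 : ℝ) 1)
    (hsort : ∀ i j : Fin N, i ≤ j → lam j ≤ lam i)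
    (S : Matrix (Fin N) (Fin N) ℝ) (hS : S = Q * Matrix.diagonal lam * Qᵀ)
    (Tstar : Finset (Fin N)) (hTcard : Tstar.card = k)
    (hopt : ∀ j ∈ Tstar, ∀ i ∉ Tstar,
      α * |lam i| / (1 - α * lam i) ≤ α * |lam j| / (1 - α * lam j))
    (ST : Matrix (Fin N) (Fin N) ℝ)
    (hST : ST = ∑ j ∈ Tstar, lam j • Matrix.vecMulVec (fun a => Q a j) (fun a => Q a j))
    (A Ahat Ak : Matrix (Fin N) (Fin N) ℝ)
    (hA : A = (1 - α • S)⁻¹) (hAhat : Ahat = (1 - α • ST)⁻¹)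
    (hAk : Ak = ∑ i ∈ Finset.univ.filter (fun i : Fin N => (i : ℕ) < k),
      (1 / (1 - α * lam i)) • Matrix.vecMulVec (fun a => Q a i) (fun a => Q a i)) :
    l2OpNorm (Ahat - A) < l2OpNorm (Ak - A) ∧
      frobNorm (Ahat - A) < frobNorm (Ak - A) :=
  stmt9_general N k hkN α hα Q hQ₁ lam hlam S hS Tstar hTcard hopt ST hST A Ahat Ak hA hAhat hAk
end
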